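/- arXiv:1103.4925 — 9 statements merged into one kernel-verified Lean document; each statement's English description precedes it below -/
import Mathlib

section
/- Second-order form of the selfsimilar profile equation: let G : ℝ → ℝ³ be twice continuously differentiable with |G'(σ)| = 1 for all σ ∈ ℝ and satisfying (1/2) G(σ) − (σ/2) G'(σ) = G'(σ) ∧ G''(σ) for all σ ∈ ℝ. Then G''(σ) = (1/2) G(σ) ∧ G'(σ) for all σ ∈ ℝ. -/
noncomputable section

/-- `ℝ³` as a euclidean space. -/
abbrev E3 := EuclideanSpace ℝ (Fin 3)

/-- The cross product on `ℝ³`. -/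
def cross3 (u v : E3) : E3 :=
  WithLp.toLp 2 ![u 1 * v 2 - u 2 * v 1, u 2 * v 0 - u 0 * v 2, u 0 * v 1 - u 1 * v 0]

/-- Second-order form of the selfsimilar profile equation: if `|G'| ≡ 1` and
`(1/2)G − (σ/2)G' = G' ∧ G''`, then `G'' = (1/2) G ∧ G'`. -/
theorem statement7
    (G : ℝ → E3) (hG : ContDiff ℝ 2 G)
    (hunit : ∀ σ : ℝ, ‖deriv G σ‖ = 1)
    (heq : ∀ σ : ℝ,
      (1/2 : ℝ) • G σ - (σ/2) • deriv G σ = cross3 (deriv G σ) (deriv (deriv G) σ)) :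
    ∀ σ : ℝ, deriv (deriv G) σ = (1/2 : ℝ) • cross3 (G σ) (deriv G σ) := by
  have hG' : ContDiff ℝ 1 (deriv G) := by
    have h21 : (2 : WithTop ℕ∞) = 1 + 1 := by norm_num
    rw [h21, contDiff_succ_iff_deriv] at hG
    exact hG.2.2
  have hdiff : Differentiable ℝ (deriv G) := hG'.differentiable one_ne_zero
  have key : ∀ σ : ℝ, (inner ℝ (deriv G σ) (deriv (deriv G) σ) : ℝ) = 0 := by
    intro σ
    have hd : HasDerivAt (deriv G) (deriv (deriv G) σ) σ := (hdiff σ).hasDerivAt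
    have h2 : HasDerivAt (fun s => (inner ℝ (deriv G s) (deriv G s) : ℝ))
        (inner ℝ (deriv G σ) (deriv (deriv G) σ) + inner ℝ (deriv (deriv G) σ) (deriv G σ)) σ :=
      hd.inner ℝ hd
    have hconst : (fun s => (inner ℝ (deriv G s) (deriv G s) : ℝ)) = fun _ => 1 := by
      funext s
      rw [real_inner_self_eq_norm_sq, hunit s]; norm_num
    rw [hconst] at h2
    have h0 := h2.unique (hasDerivAt_const σ 1)
    linarith [h0, real_inner_comm (deriv G σ) (deriv (deriv G) σ)]
  intro σ
  have hunit' : deriv G σ 0 ^ 2 + deriv G σ 1 ^ 2 + deriv G σ 2 ^ 2 = 1 := by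
    have h := real_inner_self_eq_norm_sq (deriv G σ)
    rw [hunit σ] at h
    simp only [PiLp.inner_apply, RCLike.inner_apply, conj_trivial, Fin.sum_univ_three] at h
    nlinarith [h]
  have horth : deriv G σ 0 * deriv (deriv G) σ 0 + deriv G σ 1 * deriv (deriv G) σ 1
      + deriv G σ 2 * deriv (deriv G) σ 2 = 0 := by
    have h := key σ
    simpa [PiLp.inner_apply, RCLike.inner_apply, Fin.sum_univ_three, mul_comm] using h
  have e0 := congrArg (fun v : E3 => v 0) (heq σ)
  have e1 := congrArg (fun v : E3 => v 1) (heq σ)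
  have e2 := congrArg (fun v : E3 => v 2) (heq σ)
  simp only [PiLp.sub_apply, PiLp.smul_apply, smul_eq_mul, cross3, PiLp.toLp_apply, Matrix.cons_val_zero,
    Matrix.cons_val_one, Matrix.head_cons, Matrix.cons_val_two, Matrix.tail_cons] at e0 e1 e2
  ext i
  fin_cases i <;> simp [cross3]
  · linear_combination -(deriv G σ 2 * e1) + deriv G σ 1 * e2
      - deriv (deriv G) σ 0 * hunit' + deriv G σ 0 * horth
  · linear_combination -(deriv G σ 0 * e2) + deriv G σ 2 * e0
      - deriv (deriv G) σ 1 * hunit' + deriv G σ 1 * horth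
  · linear_combination -(deriv G σ 1 * e0) + deriv G σ 0 * e1
      - deriv (deriv G) σ 2 * hunit' + deriv G σ 2 * horth
end
end

section
/- Curvature and torsion of selfsimilar binormal-flow profiles: let c : ℝ → (0,∞) be continuously differentiable, τ : ℝ → ℝ continuous, and let T, n, b : ℝ → ℝ³ be a family of orthonormal frames with b(σ) = T(σ) ∧ n(σ) for all σ, satisfying the Frenet system T' = c n, n' = −c T + τ b, b' = −τ n. Suppose in addition that −(σ/2) T'(σ) = T(σ) ∧ T''(σ) for all σ ∈ ℝ. Then c is constant and τ(σ) = σ/2 for all σ ∈ ℝ. -/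
noncomputable section

lemma cross3_add_right (u v w : E3) : cross3 u (v + w) = cross3 u v + cross3 u w := by
  ext i
  fin_cases i <;>
    simp [cross3, PiLp.add_apply, Matrix.cons_val_zero, Matrix.cons_val_one, Matrix.head_cons] <;>
    ring

lemma cross3_smul_right (r : ℝ) (u v : E3) : cross3 u (r • v) = r • cross3 u v := by
  ext i
  fin_cases i <;>
    simp [cross3, PiLp.smul_apply, smul_eq_mul, Matrix.cons_val_zero, Matrix.cons_val_one,
      Matrix.head_cons] <;> ring

lemma cross3_self (u : E3) : cross3 u u = 0 := by
  ext i
  fin_cases i <;>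
    simp [cross3, Matrix.cons_val_zero, Matrix.cons_val_one, Matrix.head_cons] <;> ring

lemma cross3_cross3 (u v : E3) :
    cross3 u (cross3 u v) = (inner ℝ u v : ℝ) • u - (inner ℝ u u : ℝ) • v := by
  ext i
  fin_cases i <;>
    simp [cross3, PiLp.inner_apply, RCLike.inner_apply, Fin.sum_univ_three, PiLp.sub_apply,
      PiLp.smul_apply, smul_eq_mul, conj_trivial, Matrix.cons_val_zero, Matrix.cons_val_one,
      Matrix.head_cons, EuclideanSpace.norm_sq_eq, Real.norm_eq_abs, sq_abs] <;> ring

/-- Curvature and torsion of selfsimilar binormal-flow profiles: an orthonormal Frenet frame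
(with `b = T ∧ n`) whose tangent satisfies `−(σ/2)T' = T ∧ T''` has constant curvature and
torsion `τ(σ) = σ/2`. -/
theorem statement8
    (c τ : ℝ → ℝ)
    (hc : ContDiff ℝ 1 c) (hcpos : ∀ σ : ℝ, 0 < c σ) (hτ : Continuous τ)
    (T n b : ℝ → E3)
    (hTnorm : ∀ σ : ℝ, ‖T σ‖ = 1) (hnnorm : ∀ σ : ℝ, ‖n σ‖ = 1) (hbnorm : ∀ σ : ℝ, ‖b σ‖ = 1)
    (hTn : ∀ σ : ℝ, (inner ℝ (T σ) (n σ) : ℝ) = 0)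
    (hTb : ∀ σ : ℝ, (inner ℝ (T σ) (b σ) : ℝ) = 0)
    (hnb : ∀ σ : ℝ, (inner ℝ (n σ) (b σ) : ℝ) = 0)
    (hb : ∀ σ : ℝ, b σ = cross3 (T σ) (n σ))
    (hT' : ∀ σ : ℝ, deriv T σ = c σ • n σ)
    (hn' : ∀ σ : ℝ, deriv n σ = (-(c σ)) • T σ + τ σ • b σ)
    (hb' : ∀ σ : ℝ, deriv b σ = (-(τ σ)) • n σ)
    (hself : ∀ σ : ℝ, (-(σ/2)) • deriv T σ = cross3 (T σ) (deriv (deriv T) σ)) :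
    (∃ a : ℝ, ∀ σ : ℝ, c σ = a) ∧ (∀ σ : ℝ, τ σ = σ/2) := by
  have hTT : ∀ σ, (inner ℝ (T σ) (T σ) : ℝ) = 1 := by
    intro σ; rw [real_inner_self_eq_norm_sq, hTnorm σ]; norm_num
  have hnn : ∀ σ, (inner ℝ (n σ) (n σ) : ℝ) = 1 := by
    intro σ; rw [real_inner_self_eq_norm_sq, hnnorm σ]; norm_num
  have hbb : ∀ σ, (inner ℝ (b σ) (b σ) : ℝ) = 1 := by
    intro σ; rw [real_inner_self_eq_norm_sq, hbnorm σ]; norm_num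
  have hTb' : ∀ σ, cross3 (T σ) (b σ) = -(n σ) := by
    intro σ
    rw [hb σ, cross3_cross3, hTn σ, hTT σ]
    simp
  have hkey : ∀ σ : ℝ, deriv c σ = 0 ∧ τ σ = σ / 2 := by
    intro σ
    -- n is differentiable at σ
    have hnne : deriv n σ ≠ 0 := by
      intro h
      have h2 : (inner ℝ (T σ) (deriv n σ) : ℝ) = -(c σ) := by
        rw [hn' σ, inner_add_right, real_inner_smul_right, real_inner_smul_right, hTb σ, hTT σ]
        ring
      rw [h, inner_zero_right] at h2
      exact absurd h2.symm (by simpa using (hcpos σ).ne')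
    have hnd : DifferentiableAt ℝ n σ := differentiableAt_of_deriv_ne_zero hnne
    have hcd : HasDerivAt c (deriv c σ) σ :=
      ((hc.differentiable one_ne_zero) σ).hasDerivAt
    have hprod : HasDerivAt (fun s => c s • n s)
        (c σ • deriv n σ + deriv c σ • n σ) σ := hcd.smul hnd.hasDerivAt
    have hd2 : deriv (deriv T) σ = c σ • deriv n σ + deriv c σ • n σ := by
      have : deriv T = fun s => c s • n s := funext hT'
      rw [this]; exact hprod.deriv
    have key := hself σ
    rw [hT' σ, hd2, hn' σ] at key
    simp only [smul_add, smul_smul, cross3_add_right, cross3_smul_right, cross3_self,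
      smul_zero, hTb' σ, ← hb σ] at key
    -- key : (-(σ/2)) • (c σ • n σ) = deriv c σ • b σ + ((c σ * -(c σ)) • 0 + (c σ * τ σ) • -(n σ))
    have keyn := congrArg (fun v => (inner ℝ (n σ) v : ℝ)) key
    have keyb := congrArg (fun v => (inner ℝ (b σ) v : ℝ)) key
    simp only [inner_add_right, real_inner_smul_right, inner_neg_right, inner_zero_right,
      hnn σ, hnb σ, real_inner_comm (b σ) (n σ), hbb σ] at keyn keyb
    rw [real_inner_comm (n σ) (b σ), hnb σ] at keyb
    constructor
    · linarith [keyb]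
    · have hcne := (hcpos σ).ne'
      have : c σ * τ σ = c σ * (σ / 2) := by nlinarith [keyn]
      exact mul_left_cancel₀ hcne this
  refine ⟨⟨c 0, fun σ => ?_⟩, fun σ => (hkey σ).2⟩
  exact is_const_of_deriv_eq_zero (hc.differentiable one_ne_zero) (fun x => (hkey x).1) σ 0
end
end

section
/- Third-order linear ODE for the selfsimilar profile: let a > 0 and let T, n, b : ℝ → ℝ³ be continuously differentiable and satisfy the system T'(s) = a n(s), n'(s) = −a T(s) + (s/2) b(s), b'(s) = −(s/2) n(s) for all s ∈ ℝ. Define G(s) := s T(s) + 2a b(s). Then G' = T, and G satisfies the third-order linear ODE G'''(s) + (a² + s²/4) G'(s) − (s/4) G(s) = 0 for all s ∈ ℝ, with G(0) = 2a b(0), G'(0) = T(0), and G''(0) = a n(0). -/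
noncomputable section

/-- Third-order linear ODE for the selfsimilar profile: if `T' = a n`, `n' = −a T + (s/2) b`,
`b' = −(s/2) n` and `G(s) = s T(s) + 2a b(s)`, then `G' = T` and
`G''' + (a² + s²/4) G' − (s/4) G = 0`, with the stated data at `s = 0`. -/
theorem statement9
    (a : ℝ) (ha : 0 < a)
    (T n b : ℝ → E3)
    (hTreg : ContDiff ℝ 1 T) (hnreg : ContDiff ℝ 1 n) (hbreg : ContDiff ℝ 1 b)
    (hT' : ∀ s : ℝ, deriv T s = a • n s)
    (hn' : ∀ s : ℝ, deriv n s = (-a) • T s + (s/2) • b s)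
    (hb' : ∀ s : ℝ, deriv b s = (-(s/2)) • n s)
    (G : ℝ → E3) (hG : ∀ s : ℝ, G s = s • T s + (2*a) • b s) :
    (∀ s : ℝ, deriv G s = T s)
    ∧ (∀ s : ℝ,
        deriv (deriv (deriv G)) s + (a^2 + s^2/4) • deriv G s - (s/4) • G s = 0)
    ∧ G 0 = (2*a) • b 0 ∧ deriv G 0 = T 0 ∧ deriv (deriv G) 0 = a • n 0 := by
  have hTd : ∀ s : ℝ, HasDerivAt T (a • n s) s := fun s => by
    have := (hTreg.differentiable one_ne_zero s).hasDerivAt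
    rwa [hT' s] at this
  have hnd : ∀ s : ℝ, HasDerivAt n ((-a) • T s + (s/2) • b s) s := fun s => by
    have := (hnreg.differentiable one_ne_zero s).hasDerivAt
    rwa [hn' s] at this
  have hbd : ∀ s : ℝ, HasDerivAt b ((-(s/2)) • n s) s := fun s => by
    have := (hbreg.differentiable one_ne_zero s).hasDerivAt
    rwa [hb' s] at this
  have hGd : ∀ s : ℝ, HasDerivAt G (T s) s := by
    intro s
    have h1 : HasDerivAt (fun s : ℝ => s • T s + (2*a) • b s)
        (s • (a • n s) + (1:ℝ) • T s + (2*a) • ((-(s/2)) • n s)) s := by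
      exact ((hasDerivAt_id s).smul (hTd s)).add ((hbd s).const_smul (2*a))
    have h2 : s • (a • n s) + (1 : ℝ) • T s + (2*a) • ((-(s/2)) • n s) = T s := by
      module
    rw [h2] at h1
    exact h1.congr_of_eventuallyEq (Filter.Eventually.of_forall fun x => hG x)
  have hG1 : deriv G = T := funext fun s => (hGd s).deriv
  have hG2 : deriv (deriv G) = fun s => a • n s := by
    rw [hG1]; exact funext fun s => (hTd s).deriv
  have hG3 : ∀ s : ℝ, deriv (deriv (deriv G)) s = a • ((-a) • T s + (s/2) • b s) := by
    intro s
    rw [hG2]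
    exact (((hnd s).const_smul a)).deriv
  refine ⟨fun s => by rw [hG1], fun s => ?_, ?_, ?_, ?_⟩
  · rw [hG3, hG1, hG s]
    module
  · rw [hG 0]; simp
  · rw [hG1]
  · rw [hG2]
end
end

section
/- Existence of the asymptotic direction and integral representation of the selfsimilar profile: let a > 0, let b : (0,∞) → ℝ³ be continuous with |b(s)| = 1 for all s > 0, and let G : (0,∞) → ℝ³ be differentiable with G(s) − s G'(s) = 2a b(s) for all s > 0. Then the limit A⁺ := lim_{s→∞} G(s)/s exists in ℝ³, and for every s > 0 one has G(s) = s A⁺ + 2a s ∫_s^∞ b(σ)/σ² dσ, where the improper integral converges absolutely. -/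
open MeasureTheory

noncomputable section

/-- Existence of the asymptotic direction and integral representation of the selfsimilar
profile: if `G(s) − s G'(s) = 2a b(s)` for `s > 0` with `b` continuous and unitary, then
`A⁺ = lim_{s→∞} G(s)/s` exists and `G(s) = s A⁺ + 2as ∫_s^∞ b(σ)/σ² dσ`, the integral
converging absolutely. -/
theorem statement12
    (a : ℝ) (ha : 0 < a)
    (b : ℝ → E3)
    (hbcont : ContinuousOn b (Set.Ioi 0))
    (hbnorm : ∀ s > (0:ℝ), ‖b s‖ = 1)
    (G : ℝ → E3)
    (hGdiff : ∀ s > (0:ℝ), DifferentiableAt ℝ G s)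
    (heq : ∀ s > (0:ℝ), G s - s • deriv G s = (2*a) • b s) :
    ∃ A : E3,
      Filter.Tendsto (fun s : ℝ => s⁻¹ • G s) Filter.atTop (nhds A)
      ∧ ∀ s > (0:ℝ),
          IntegrableOn (fun σ : ℝ => (σ^2)⁻¹ • b σ) (Set.Ioi s)
          ∧ G s = s • A + (2*a*s) • ∫ σ in Set.Ioi s, (σ^2)⁻¹ • b σ := by
  set f : ℝ → E3 := fun t => t⁻¹ • G t with hf
  set h : ℝ → E3 := fun σ => (σ^2)⁻¹ • b σ with hh
  set g : ℝ → E3 := fun σ => (-(2*a)) • h σ with hg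
  -- integrability of h on Ioi s
  have hint : ∀ s > (0:ℝ), IntegrableOn h (Set.Ioi s) := by
    intro s hs
    have hcont : ContinuousOn h (Set.Ioi s) := by
      apply ContinuousOn.fun_smul
      · exact ((continuousOn_id.pow 2).inv₀ (fun x hx => by
          have : (0:ℝ) < x := lt_trans hs hx
          exact pow_ne_zero 2 (ne_of_gt this)))
      · exact hbcont.mono (fun x hx => lt_trans hs hx)
    have hmeas : AEStronglyMeasurable h (volume.restrict (Set.Ioi s)) :=
      hcont.aestronglyMeasurable measurableSet_Ioi
    have hdom : IntegrableOn (fun σ : ℝ => σ ^ (-2:ℝ)) (Set.Ioi s) :=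
      integrableOn_Ioi_rpow_of_lt (by norm_num) hs
    refine Integrable.mono' hdom hmeas ?_
    filter_upwards [ae_restrict_mem measurableSet_Ioi] with σ hσ
    have hσ0 : (0:ℝ) < σ := lt_trans hs hσ
    have : ‖h σ‖ = (σ^2)⁻¹ := by
      rw [hh]
      rw [norm_smul, hbnorm σ hσ0, Real.norm_eq_abs, abs_of_pos (by positivity), mul_one]
    rw [this, Real.rpow_neg hσ0.le]
    rw [show ((2:ℝ)) = ((2:ℕ):ℝ) by norm_num, Real.rpow_natCast]
  have hintg : ∀ s > (0:ℝ), IntegrableOn g (Set.Ioi s) := fun s hs =>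
    (hint s hs).fun_smul _
  -- derivative of f
  have hderiv : ∀ s > (0:ℝ), HasDerivAt f (g s) s := by
    intro s hs
    have h1 : HasDerivAt (fun t : ℝ => t⁻¹) (-(s^2)⁻¹) s := by
      simpa using hasDerivAt_inv (ne_of_gt hs)
    have h2 := (hGdiff s hs).hasDerivAt
    have h3 : HasDerivAt f (s⁻¹ • deriv G s + -(s ^ 2)⁻¹ • G s) s := h1.smul h2
    convert h3 using 1
    have e : (2*a) • b s = G s - s • deriv G s := (heq s hs).symm
    have hs2 : (-(s^2)⁻¹) * s = -s⁻¹ := by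
      rw [sq]; field_simp
    simp only [hg, hh, smul_smul]
    rw [show (-(2*a)) * (s^2)⁻¹ = (-(s^2)⁻¹) * (2*a) by ring, ← smul_smul, e,
      smul_sub, smul_smul, hs2]
    module
  -- FTC
  have hFTC : ∀ s > (0:ℝ), ∀ t, s ≤ t → ∫ σ in s..t, g σ = f t - f s := by
    intro s hs t hst
    apply intervalIntegral.integral_eq_sub_of_hasDerivAt
    · intro x hx
      rw [Set.uIcc_of_le hst] at hx
      exact hderiv x (lt_of_lt_of_le hs hx.1)
    · apply IntegrableOn.intervalIntegrable
      apply (hintg (s/2) (by positivity)).mono_set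
      rw [Set.uIcc_of_le hst]
      exact fun x hx => lt_of_lt_of_le (by linarith) hx.1
  have hT : ∀ s > (0:ℝ), Filter.Tendsto f Filter.atTop
      (nhds (f s + ∫ σ in Set.Ioi s, g σ)) := by
    intro s hs
    have h1 : Filter.Tendsto (fun t => f s + ∫ σ in s..t, g σ) Filter.atTop
        (nhds (f s + ∫ σ in Set.Ioi s, g σ)) :=
      tendsto_const_nhds.add
        (MeasureTheory.intervalIntegral_tendsto_integral_Ioi s (hintg s hs)
          Filter.tendsto_id)
    apply h1.congr'
    filter_upwards [Filter.eventually_ge_atTop s] with t ht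
    rw [hFTC s hs t ht]; abel
  set A : E3 := f 1 + ∫ σ in Set.Ioi 1, g σ with hA
  have hTA : Filter.Tendsto f Filter.atTop (nhds A) := hT 1 one_pos
  refine ⟨A, hTA, ?_⟩
  intro s hs
  refine ⟨hint s hs, ?_⟩
  have hAeq : A = f s + ∫ σ in Set.Ioi s, g σ := tendsto_nhds_unique hTA (hT s hs)
  have hig : (∫ σ in Set.Ioi s, g σ) = (-(2*a)) • ∫ σ in Set.Ioi s, h σ := by
    rw [hg]; exact integral_smul _ _
  have hfs : f s = A + (2*a) • ∫ σ in Set.Ioi s, h σ := by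
    rw [hAeq, hig, neg_smul]; abel
  have hGs : G s = s • f s := by
    rw [hf]; simp only [smul_smul, mul_inv_cancel₀ (ne_of_gt hs), one_smul]
  rw [hGs, hfs, smul_add, smul_smul]
  ring_nf
end
end

section
/- Proposition (corner estimate for selfsimilar solutions of the binormal flow): let a > 0, let A⁺, A⁻ ∈ ℝ³, let b : ℝ \ {0} → ℝ³ satisfy |b(σ)| = 1 for all σ ≠ 0, and let G : ℝ → ℝ³ satisfy |G(0)| = 2a, G(s) = s A⁺ + 2a s ∫_s^∞ b(σ)/σ² dσ for s > 0, and G(s) = s A⁻ − 2a s ∫_{−∞}^s b(σ)/σ² dσ for s < 0. Define χ(s,t) := √t · G(s/√t) for s ∈ ℝ, t > 0. Then for all s ∈ ℝ and all t > 0: | χ(s,t) − s A⁺ 𝟙_{[0,∞)}(s) − s A⁻ 𝟙_{(−∞,0)}(s) | ≤ 2a √t. In particular χ(s,t) converges uniformly as t ↓ 0 to the V-shaped curve s A⁺ 𝟙_{[0,∞)}(s) + s A⁻ 𝟙_{(−∞,0)}(s). -/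
open MeasureTheory

noncomputable section

lemma keyC (c : ℝ) (hc : 0 < c) (h : ℝ → E3)
    (hh : ∀ σ ∈ Set.Ioi c, ‖h σ‖ ≤ σ ^ (-2 : ℝ)) :
    ‖∫ σ in Set.Ioi c, h σ‖ ≤ c⁻¹ := by
  calc ‖∫ σ in Set.Ioi c, h σ‖ ≤ ∫ σ in Set.Ioi c, ‖h σ‖ :=
        norm_integral_le_integral_norm _
    _ ≤ ∫ σ in Set.Ioi c, σ ^ (-2 : ℝ) := by
        refine integral_mono_of_nonneg (ae_of_all _ fun σ => norm_nonneg _)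
          (integrableOn_Ioi_rpow_of_lt (by norm_num) hc) ?_
        exact (ae_restrict_iff' measurableSet_Ioi).2 (ae_of_all _ hh)
    _ = c⁻¹ := by
        rw [integral_Ioi_rpow_of_lt (by norm_num) hc]
        norm_num [Real.rpow_neg_one]

lemma rpow_neg_two_eq {σ : ℝ} (_hσ : 0 < σ) : σ ^ (-2 : ℝ) = (σ ^ 2)⁻¹ := by
  rw [show (-2 : ℝ) = ((-2 : ℤ) : ℝ) by norm_num, Real.rpow_intCast]
  simp [zpow_neg]

lemma keyIoi (b : ℝ → E3) (hb : ∀ σ : ℝ, σ ≠ 0 → ‖b σ‖ = 1)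
    {x : ℝ} (hx : 0 < x) :
    ‖∫ σ in Set.Ioi x, (σ ^ 2)⁻¹ • b σ‖ ≤ x⁻¹ := by
  refine keyC x hx _ fun σ hσ => ?_
  have hσ0 : 0 < σ := hx.trans hσ
  rw [norm_smul, hb σ hσ0.ne', rpow_neg_two_eq hσ0]
  simp [abs_of_pos (by positivity : (0:ℝ) < (σ ^ 2)⁻¹)]

lemma keyIio (b : ℝ → E3) (hb : ∀ σ : ℝ, σ ≠ 0 → ‖b σ‖ = 1)
    {x : ℝ} (hx : x < 0) :
    ‖∫ σ in Set.Iio x, (σ ^ 2)⁻¹ • b σ‖ ≤ (-x)⁻¹ := by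
  have heq : (∫ σ in Set.Iio x, (σ ^ 2)⁻¹ • b σ)
      = ∫ σ in Set.Ioi (-x), ((-σ) ^ 2)⁻¹ • b (-σ) := by
    rw [← integral_Iic_eq_integral_Iio,
      ← integral_comp_neg_Iic x (fun σ => ((-σ) ^ 2)⁻¹ • b (-σ))]
    simp
  rw [heq]
  refine keyC (-x) (by linarith) _ fun σ hσ => ?_
  have hσ0 : 0 < σ := lt_trans (by linarith) hσ
  rw [norm_smul, hb (-σ) (by simp [hσ0.ne']), rpow_neg_two_eq hσ0]
  simp [abs_of_pos (by positivity : (0:ℝ) < (σ ^ 2)⁻¹)]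

/-- Corner estimate for selfsimilar solutions of the binormal flow: with
`χ(s,t) = √t G(s/√t)` and `G` given by the integral representations with asymptotic
directions `A⁺`, `A⁻`, one has
`|χ(s,t) − s A⁺ 𝟙_{[0,∞)}(s) − s A⁻ 𝟙_{(−∞,0)}(s)| ≤ 2a√t`, and `χ(·,t)` converges
uniformly as `t ↓ 0` to the V-shaped curve. -/
theorem statement13
    (a : ℝ) (ha : 0 < a)
    (Ap Am : E3)
    (b : ℝ → E3) (hb : ∀ σ : ℝ, σ ≠ 0 → ‖b σ‖ = 1)
    (G : ℝ → E3) (hG0 : ‖G 0‖ = 2*a)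
    (hGp : ∀ s > (0:ℝ), G s = s • Ap + (2*a*s) • ∫ σ in Set.Ioi s, (σ^2)⁻¹ • b σ)
    (hGm : ∀ s < (0:ℝ), G s = s • Am - (2*a*s) • ∫ σ in Set.Iio s, (σ^2)⁻¹ • b σ)
    (χ : ℝ → ℝ → E3)
    (hχ : ∀ s t : ℝ, χ s t = Real.sqrt t • G (s / Real.sqrt t)) :
    (∀ s : ℝ, ∀ t > (0:ℝ),
      ‖χ s t - Set.indicator (Set.Ici 0) (fun s' : ℝ => s' • Ap) s
        - Set.indicator (Set.Iio 0) (fun s' : ℝ => s' • Am) s‖ ≤ 2*a*Real.sqrt t)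
    ∧ TendstoUniformly (fun t s => χ s t)
        (fun s : ℝ => Set.indicator (Set.Ici 0) (fun s' : ℝ => s' • Ap) s
          + Set.indicator (Set.Iio 0) (fun s' : ℝ => s' • Am) s)
        (nhdsWithin 0 (Set.Ioi 0)) := by
  have key : ∀ s : ℝ, ∀ t > (0:ℝ),
      ‖χ s t - Set.indicator (Set.Ici 0) (fun s' : ℝ => s' • Ap) s
        - Set.indicator (Set.Iio 0) (fun s' : ℝ => s' • Am) s‖ ≤ 2*a*Real.sqrt t := by
    intro s t ht
    have hst : 0 < Real.sqrt t := Real.sqrt_pos.2 ht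
    rcases lt_trichotomy s 0 with hs | hs | hs
    · -- s < 0
      set x := s / Real.sqrt t with hxdef
      have hx : x < 0 := div_neg_of_neg_of_pos hs hst
      have hsx : Real.sqrt t * x = s := by
        rw [hxdef]
        field_simp [hst.ne']
      rw [hχ, Set.indicator_of_notMem (by simpa using not_le.2 hs),
        Set.indicator_of_mem (by simpa using hs), hGm x hx]
      have hI := keyIio b hb hx
      set J := ∫ σ in Set.Iio x, (σ ^ 2)⁻¹ • b σ
      have hexpr : Real.sqrt t • (x • Am - (2*a*x) • J) - 0 - s • Am
          = (-(Real.sqrt t * (2*a*x))) • J := by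
        rw [smul_sub, smul_smul, smul_smul, hsx]
        module
      rw [hexpr, norm_smul, Real.norm_eq_abs]
      have : |(-(Real.sqrt t * (2*a*x)))| = Real.sqrt t * (2*a*(-x)) := by
        rw [abs_of_pos (by nlinarith)]; ring
      rw [this]
      calc Real.sqrt t * (2*a*(-x)) * ‖J‖
          ≤ Real.sqrt t * (2*a*(-x)) * (-x)⁻¹ := by
            apply mul_le_mul_of_nonneg_left hI (by nlinarith)
        _ = 2*a*Real.sqrt t := by
            have hxne : -x ≠ 0 := ne_of_gt (by linarith)
            rw [mul_assoc, mul_inv_cancel_right₀ hxne]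
            ring
    · -- s = 0
      subst hs
      rw [hχ, Set.indicator_of_mem (by simp), Set.indicator_of_notMem (by simp)]
      simp only [zero_div, zero_smul, sub_zero]
      rw [norm_smul, hG0, Real.norm_eq_abs, abs_of_pos hst]
      ring_nf
      exact le_refl _
    · -- s > 0
      set x := s / Real.sqrt t with hxdef
      have hx : 0 < x := div_pos hs hst
      have hsx : Real.sqrt t * x = s := by
        rw [hxdef]
        field_simp [hst.ne']
      rw [hχ, Set.indicator_of_mem (by simpa using hs.le),
        Set.indicator_of_notMem (by simpa using hs.le), hGp x hx]
      have hI := keyIoi b hb hx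
      set J := ∫ σ in Set.Ioi x, (σ ^ 2)⁻¹ • b σ
      have hexpr : Real.sqrt t • (x • Ap + (2*a*x) • J) - s • Ap - 0
          = (Real.sqrt t * (2*a*x)) • J := by
        rw [smul_add, smul_smul, smul_smul, hsx]
        module
      rw [hexpr, norm_smul, Real.norm_eq_abs, abs_of_pos (by positivity)]
      calc Real.sqrt t * (2*a*x) * ‖J‖
          ≤ Real.sqrt t * (2*a*x) * x⁻¹ := by
            apply mul_le_mul_of_nonneg_left hI (by positivity)
        _ = 2*a*Real.sqrt t := by
            field_simp
  refine ⟨key, ?_⟩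
  rw [Metric.tendstoUniformly_iff]
  intro ε hε
  have h1 : Filter.Tendsto (fun t => 2*a*Real.sqrt t) (nhdsWithin 0 (Set.Ioi 0)) (nhds 0) := by
    have h0 : Filter.Tendsto Real.sqrt (nhdsWithin 0 (Set.Ioi 0)) (nhds (Real.sqrt 0)) :=
      (Real.continuous_sqrt.tendsto 0).mono_left nhdsWithin_le_nhds
    simpa using h0.const_mul (2*a)
  filter_upwards [h1.eventually (gt_mem_nhds hε), self_mem_nhdsWithin] with t h2 ht s
  have hk := key s t ht
  have heq : dist (Set.indicator (Set.Ici 0) (fun s' : ℝ => s' • Ap) s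
      + Set.indicator (Set.Iio 0) (fun s' : ℝ => s' • Am) s) (χ s t)
      = ‖χ s t - Set.indicator (Set.Ici 0) (fun s' : ℝ => s' • Ap) s
        - Set.indicator (Set.Iio 0) (fun s' : ℝ => s' • Am) s‖ := by
    rw [dist_eq_norm, ← norm_neg]
    congr 1
    abel
  rw [heq]
  exact lt_of_le_of_lt hk h2
end
end

section
/- Conserved energy for the linear complex second-order ODE associated to a Frenet frame: let c : ℝ → (0,∞) be continuously differentiable, let τ : ℝ → ℝ be continuous, and let θ : ℝ → ℂ be twice continuously differentiable and solve θ''(s) + ( −c'(s)/c(s) + i τ(s) ) θ'(s) + (c(s)²/4) θ(s) = 0 for all s ∈ ℝ. Then the quantity E(s) := |θ'(s)|²/c(s)² + |θ(s)|²/4 is constant in s, i.e. E(s) = E(0) for all s ∈ ℝ. -/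
open Complex

lemma normSq_hasDerivAt {f : ℝ → ℂ} {f' : ℂ} {s : ℝ} (hf : HasDerivAt f f' s) :
    HasDerivAt (fun t => Complex.normSq (f t))
      (2 * ((starRingEnd ℂ) (f s) * f').re) s := by
  have hre : HasDerivAt (fun t => (f t).re) f'.re s :=
    (Complex.reCLM.hasFDerivAt.comp_hasDerivAt s hf)
  have him : HasDerivAt (fun t => (f t).im) f'.im s :=
    (Complex.imCLM.hasFDerivAt.comp_hasDerivAt s hf)
  have h := (hre.fun_mul hre).fun_add (him.fun_mul him)
  have heq : (fun t => Complex.normSq (f t)) = fun t => (f t).re * (f t).re + (f t).im * (f t).im := by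
    funext t; simp [Complex.normSq_apply]
  rw [heq]
  refine h.congr_deriv ?_; symm
  simp [Complex.mul_re]
  ring

/-- Conserved energy for the linear complex second-order ODE
`θ'' + (−c'/c + iτ)θ' + (c²/4)θ = 0`:
the quantity `E(s) = |θ'(s)|²/c(s)² + |θ(s)|²/4` is constant. -/
theorem statement14
    (c : ℝ → ℝ) (hc : ContDiff ℝ 1 c) (hcpos : ∀ s : ℝ, 0 < c s)
    (τ : ℝ → ℝ) (hτ : Continuous τ)
    (θ : ℝ → ℂ) (hθ : ContDiff ℝ 2 θ)
    (hode : ∀ s : ℝ,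
      deriv (deriv θ) s
        + (((-(deriv c s) / c s : ℝ) : ℂ) + (τ s : ℂ) * Complex.I) * deriv θ s
        + (((c s)^2/4 : ℝ) : ℂ) * θ s = 0) :
    ∀ s : ℝ,
      ‖deriv θ s‖^2 / (c s)^2 + ‖θ s‖^2 / 4
        = ‖deriv θ 0‖^2 / (c 0)^2 + ‖θ 0‖^2 / 4 := by
  have hθ' : ContDiff ℝ 1 (deriv θ) := by
    have := (contDiff_succ_iff_deriv.mp (by exact_mod_cast hθ : ContDiff ℝ ((1:ℕ)+1) θ)).2
    exact_mod_cast this.2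
  have hθd : Differentiable ℝ θ := hθ.differentiable (by norm_num)
  have hθ'd : Differentiable ℝ (deriv θ) := hθ'.differentiable one_ne_zero
  have hcd : Differentiable ℝ c := hc.differentiable one_ne_zero
  set E : ℝ → ℝ := fun s => Complex.normSq (deriv θ s) / (c s)^2 + Complex.normSq (θ s) / 4 with hE
  have key : ∀ s, HasDerivAt E 0 s := by
    intro s
    have hcne : c s ≠ 0 := (hcpos s).ne'
    have h1 : HasDerivAt θ (deriv θ s) s := (hθd s).hasDerivAt
    have h2 : HasDerivAt (deriv θ) (deriv (deriv θ) s) s := (hθ'd s).hasDerivAt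
    have h3 : HasDerivAt c (deriv c s) s := (hcd s).hasDerivAt
    have hn1 := normSq_hasDerivAt h2
    have hn2 := normSq_hasDerivAt h1
    have h4 : HasDerivAt (fun t => (c t)^2) (2 * c s * deriv c s) s := by
      have := h3.fun_pow 2
      simpa [mul_comm, mul_assoc, mul_left_comm] using this
    have hD := ((hn1.fun_div h4 (pow_ne_zero 2 hcne)).fun_add (hn2.div_const 4))
    refine hD.congr_deriv ?_; symm
    -- now show the derivative value is 0
    have hw : deriv (deriv θ) s
        = -((((-(deriv c s) / c s : ℝ) : ℂ) + (τ s : ℂ) * Complex.I) * deriv θ s)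
          - (((c s)^2/4 : ℝ) : ℂ) * θ s := by
      have := hode s; linear_combination this
    rw [hw]
    set z := θ s
    set w := deriv θ s
    set c0 := c s
    set c1 := deriv c s
    have hre : ((starRingEnd ℂ) w * (-((((-c1 / c0 : ℝ) : ℂ) + (τ s : ℂ) * Complex.I) * w)
        - (((c0)^2/4 : ℝ) : ℂ) * z)).re
        = (c1 / c0) * Complex.normSq w - (c0^2/4) * ((starRingEnd ℂ) w * z).re := by
      simp [Complex.normSq_apply, Complex.mul_re, Complex.mul_im, Complex.conj_re, Complex.conj_im, ← Complex.ofReal_pow]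
      ring
    have hsymm : ((starRingEnd ℂ) z * w).re = ((starRingEnd ℂ) w * z).re := by
      simp [Complex.mul_re, Complex.conj_re, Complex.conj_im]; ring
    rw [hre, hsymm]
    field_simp
    ring
  have hconst : ∀ s, E s = E 0 := by
    intro s
    have hdiff : Differentiable ℝ E := fun x => (key x).differentiableAt
    have : ∀ x, deriv E x = 0 := fun x => (key x).deriv
    exact is_const_of_deriv_eq_zero hdiff this s 0
  intro s
  have := hconst s
  simpa [hE, Complex.sq_norm] using this
end

section
/- Lemma (pointwise curvature identity for spiral-type selfsimilar profiles): let μ ∈ ℝ and let 𝒜 be the antisymmetric 3×3 matrix with rows (0, −μ, 0), (μ, 0, 0), (0, 0, 0). Let G : ℝ → ℝ³ be three times continuously differentiable with |G'(s)| = 1 for all s and satisfying (I + 𝒜) G(s) − s G'(s) = 2 G'(s) ∧ G''(s) for all s ∈ ℝ. Set T := G' and ν := −μ T₃(0) − (1/4) |(I + 𝒜) G(0)|², where T₃ is the third component of T. Then |T'(s)|² = −μ T₃(s) − ν for all s ∈ ℝ. -/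
noncomputable section

/-- View a plain vector of `ℝ³` as a point of euclidean space. -/
def toE3 (v : Fin 3 → ℝ) : E3 := WithLp.toLp 2 v

/-- Pointwise curvature identity for spiral-type selfsimilar profiles: if
`(I + 𝒜)G − sG' = 2 G' ∧ G''` with `|G'| ≡ 1`, `𝒜` the antisymmetric matrix with rows
`(0,−μ,0), (μ,0,0), (0,0,0)`, then `|T'(s)|² = −μ T₃(s) − ν` where `T = G'` and
`ν = −μ T₃(0) − (1/4)|(I + 𝒜)G(0)|²`. -/
theorem statement17
    (μ : ℝ) (A : Matrix (Fin 3) (Fin 3) ℝ)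
    (hA : A = !![0, -μ, 0; μ, 0, 0; 0, 0, 0])
    (G : ℝ → E3) (hG : ContDiff ℝ 3 G)
    (hunit : ∀ s : ℝ, ‖deriv G s‖ = 1)
    (heq : ∀ s : ℝ,
      toE3 ((1 + A).mulVec (G s)) - s • deriv G s
        = (2:ℝ) • cross3 (deriv G s) (deriv (deriv G) s))
    (ν : ℝ)
    (hν : ν = -μ * deriv G 0 2 - (1/4) * ‖toE3 ((1 + A).mulVec (G 0))‖^2) :
    ∀ s : ℝ, ‖deriv (deriv G) s‖^2 = -μ * deriv G s 2 - ν := by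
  -- basic differentiability
  have h3 : (3 : WithTop ℕ∞) = 2 + 1 := by norm_num
  have hT2 : ContDiff ℝ 2 (deriv G) := (contDiff_succ_iff_deriv.mp (h3 ▸ hG)).2.2
  have hGdiff : Differentiable ℝ G := hG.differentiable (by norm_num)
  have hTdiff : Differentiable ℝ (deriv G) := hT2.differentiable (by norm_num)
  have key : ∀ (f : ℝ → E3), Differentiable ℝ f → ∀ (s : ℝ) (i : Fin 3),
      HasDerivAt (fun r => f r i) (deriv f s i) s := by
    intro f hf s i
    have h2 := (EuclideanSpace.proj (𝕜 := ℝ) i).hasFDerivAt.comp_hasDerivAt s (hf s).hasDerivAt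
    exact h2
  -- norm formula
  have hnorm : ∀ v : E3, ‖v‖^2 = (v 0)^2 + (v 1)^2 + (v 2)^2 := by
    intro v
    rw [EuclideanSpace.norm_eq, Real.sq_sqrt (by positivity)]
    simp [Fin.sum_univ_three, sq_abs]
  -- unit tangent
  have hu2 : ∀ s : ℝ, (deriv G s 0)^2 + (deriv G s 1)^2 + (deriv G s 2)^2 = 1 := by
    intro s
    have h1 := hnorm (deriv G s)
    rw [hunit s] at h1
    linarith
  -- perpendicularity T ⊥ T'
  have hperp : ∀ s : ℝ, deriv G s 0 * deriv (deriv G) s 0 + deriv G s 1 * deriv (deriv G) s 1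
      + deriv G s 2 * deriv (deriv G) s 2 = 0 := by
    intro s
    have hψ : HasDerivAt (fun r => (deriv G r 0)^2 + (deriv G r 1)^2 + (deriv G r 2)^2)
        (((2:ℕ) : ℝ) * deriv G s 0 ^ (2-1) * deriv (deriv G) s 0
          + ((2:ℕ) : ℝ) * deriv G s 1 ^ (2-1) * deriv (deriv G) s 1
          + ((2:ℕ) : ℝ) * deriv G s 2 ^ (2-1) * deriv (deriv G) s 2) s :=
      (((key _ hTdiff s 0).pow 2).add ((key _ hTdiff s 1).pow 2)).add ((key _ hTdiff s 2).pow 2)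
    have hfun : (fun r => (deriv G r 0)^2 + (deriv G r 1)^2 + (deriv G r 2)^2)
        = fun _ : ℝ => (1:ℝ) := funext hu2
    rw [hfun] at hψ
    have h0 := hψ.unique (hasDerivAt_const s 1)
    norm_num at h0
    linarith [h0]
  -- component equations from heq
  have hE0 : ∀ s : ℝ, G s 0 - μ * G s 1 - s * deriv G s 0
      = 2 * (deriv G s 1 * deriv (deriv G) s 2 - deriv G s 2 * deriv (deriv G) s 1) := by
    intro s
    have h0 := congrArg (fun v : E3 => v 0) (heq s)
    simp [hA, toE3, cross3, Matrix.mulVec, dotProduct, Fin.sum_univ_three,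
      Matrix.one_apply] at h0
    linear_combination h0
  have hE1 : ∀ s : ℝ, μ * G s 0 + G s 1 - s * deriv G s 1
      = 2 * (deriv G s 2 * deriv (deriv G) s 0 - deriv G s 0 * deriv (deriv G) s 2) := by
    intro s
    have h0 := congrArg (fun v : E3 => v 1) (heq s)
    simp [hA, toE3, cross3, Matrix.mulVec, dotProduct, Fin.sum_univ_three,
      Matrix.one_apply] at h0
    linear_combination h0
  have hE2 : ∀ s : ℝ, G s 2 - s * deriv G s 2
      = 2 * (deriv G s 0 * deriv (deriv G) s 1 - deriv G s 1 * deriv (deriv G) s 0) := by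
    intro s
    have h0 := congrArg (fun v : E3 => v 2) (heq s)
    simp [hA, toE3, cross3, Matrix.mulVec, dotProduct, Fin.sum_univ_three,
      Matrix.one_apply] at h0
    linear_combination h0
  -- the conserved quantity Φ has vanishing derivative
  have hΦd : ∀ r : ℝ, HasDerivAt (fun x : ℝ =>
      (G x 0 - μ * G x 1 - x * deriv G x 0)^2 + (μ * G x 0 + G x 1 - x * deriv G x 1)^2
        + (G x 2 - x * deriv G x 2)^2 + 4*μ*deriv G x 2) 0 r := by
    intro r
    have hg0 := key G hGdiff r 0
    have hg1 := key G hGdiff r 1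
    have hg2 := key G hGdiff r 2
    have ht0 := key _ hTdiff r 0
    have ht1 := key _ hTdiff r 1
    have ht2 := key _ hTdiff r 2
    have hb0 : HasDerivAt (fun x : ℝ => G x 0 - μ * G x 1 - x * deriv G x 0)
        (deriv G r 0 - μ * deriv G r 1 - (1 * deriv G r 0 + r * deriv (deriv G) r 0)) r :=
      (hg0.sub (hg1.const_mul μ)).sub ((hasDerivAt_id r).mul ht0)
    have hb1 : HasDerivAt (fun x : ℝ => μ * G x 0 + G x 1 - x * deriv G x 1)
        (μ * deriv G r 0 + deriv G r 1 - (1 * deriv G r 1 + r * deriv (deriv G) r 1)) r :=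
      ((hg0.const_mul μ).add hg1).sub ((hasDerivAt_id r).mul ht1)
    have hb2 : HasDerivAt (fun x : ℝ => G x 2 - x * deriv G x 2)
        (deriv G r 2 - (1 * deriv G r 2 + r * deriv (deriv G) r 2)) r :=
      hg2.sub ((hasDerivAt_id r).mul ht2)
    have H := (((hb0.pow 2).add (hb1.pow 2)).add (hb2.pow 2)).add (ht2.const_mul (4*μ))
    refine H.congr_deriv ?_
    symm
    have e0 := hE0 r
    have e1 := hE1 r
    have e2 := hE2 r
    have hp := hperp r
    have hu := hu2 r
    simp only [pow_one, Nat.cast_ofNat]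
    linear_combination (2*μ*(deriv G r 1) + 2*r*(deriv (deriv G) r 0)) * e0
      + (-(2*μ*(deriv G r 0)) + 2*r*(deriv (deriv G) r 1)) * e1
      + (2*r*(deriv (deriv G) r 2)) * e2
      + (-(4*μ*(deriv G r 2))) * hp
      + (4*μ*(deriv (deriv G) r 2)) * hu
  -- hence Φ is constant
  have hconst : ∀ r : ℝ,
      (G r 0 - μ * G r 1 - r * deriv G r 0)^2 + (μ * G r 0 + G r 1 - r * deriv G r 1)^2
        + (G r 2 - r * deriv G r 2)^2 + 4*μ*deriv G r 2
      = (G 0 0 - μ * G 0 1 - 0 * deriv G 0 0)^2 + (μ * G 0 0 + G 0 1 - 0 * deriv G 0 1)^2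
        + (G 0 2 - 0 * deriv G 0 2)^2 + 4*μ*deriv G 0 2 := by
    intro r
    exact is_const_of_deriv_eq_zero (fun x => (hΦd x).differentiableAt)
      (fun x => (hΦd x).deriv) r 0
  -- Lagrange identity: |F|² = 4 |T'|²
  have hLag : ∀ r : ℝ,
      (G r 0 - μ * G r 1 - r * deriv G r 0)^2 + (μ * G r 0 + G r 1 - r * deriv G r 1)^2
        + (G r 2 - r * deriv G r 2)^2
      = 4*((deriv (deriv G) r 0)^2 + (deriv (deriv G) r 1)^2 + (deriv (deriv G) r 2)^2) := by
    intro r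
    linear_combination
      (G r 0 - μ * G r 1 - r * deriv G r 0
        + 2 * (deriv G r 1 * deriv (deriv G) r 2 - deriv G r 2 * deriv (deriv G) r 1)) * hE0 r
      + (μ * G r 0 + G r 1 - r * deriv G r 1
        + 2 * (deriv G r 2 * deriv (deriv G) r 0 - deriv G r 0 * deriv (deriv G) r 2)) * hE1 r
      + (G r 2 - r * deriv G r 2
        + 2 * (deriv G r 0 * deriv (deriv G) r 1 - deriv G r 1 * deriv (deriv G) r 0)) * hE2 r
      + (4*((deriv (deriv G) r 0)^2 + (deriv (deriv G) r 1)^2 + (deriv (deriv G) r 2)^2)) * hu2 r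
      + (-(4*(deriv G r 0 * deriv (deriv G) r 0 + deriv G r 1 * deriv (deriv G) r 1
          + deriv G r 2 * deriv (deriv G) r 2))) * hperp r
  -- rewrite hν in components
  have hmv0 : ((1+A).mulVec (G 0)) 0 = G 0 0 - μ * G 0 1 := by
    simp [hA, Matrix.mulVec, dotProduct, Fin.sum_univ_three, Matrix.one_apply]
    ring
  have hmv1 : ((1+A).mulVec (G 0)) 1 = μ * G 0 0 + G 0 1 := by
    simp [hA, Matrix.mulVec, dotProduct, Fin.sum_univ_three, Matrix.one_apply]
  have hmv2 : ((1+A).mulVec (G 0)) 2 = G 0 2 := by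
    simp [hA, Matrix.mulVec, dotProduct, Fin.sum_univ_three, Matrix.one_apply]
  rw [hnorm] at hν
  simp only [toE3, WithLp.ofLp_toLp] at hν
  rw [hmv0, hmv1, hmv2] at hν
  -- finish
  intro s
  rw [hnorm]
  have hc := hconst s
  have hl := hLag s
  linear_combination (1/4) * hc + (-(1/4)) * hl + hν
end
end

section
/- Conserved energy for the profile ODE of spiral selfsimilar solutions: let ν ∈ ℝ and let f : ℝ → ℂ be twice continuously differentiable and solve f''(s) + i (s/2) f'(s) + (f(s)/2) ( |f(s)|² + ν ) = 0 for all s ∈ ℝ. Then the quantity E(s) := |f'(s)|² + (1/4) ( |f(s)|² + ν )² is constant in s, i.e. E(s) = E(0) for all s ∈ ℝ. -/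
/-- Conserved energy for the profile ODE of spiral selfsimilar solutions
`f'' + i(s/2)f' + (f/2)(|f|² + ν) = 0`: the quantity
`E(s) = |f'(s)|² + (1/4)(|f(s)|² + ν)²` is constant. -/
theorem statement18
    (ν : ℝ) (f : ℝ → ℂ) (hf : ContDiff ℝ 2 f)
    (hode : ∀ s : ℝ,
      deriv (deriv f) s + Complex.I * ((s/2 : ℝ) : ℂ) * deriv f s
        + (f s / 2) * ((‖f s‖^2 + ν : ℝ) : ℂ) = 0) :
    ∀ s : ℝ,
      ‖deriv f s‖^2 + (1/4) * (‖f s‖^2 + ν)^2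
        = ‖deriv f 0‖^2 + (1/4) * (‖f 0‖^2 + ν)^2 := by
  have hfd : Differentiable ℝ f := hf.differentiable (by norm_num)
  have h2 : ContDiff ℝ 1 (deriv f) := by
    have := (contDiff_succ_iff_deriv (n := 1)).mp (by exact_mod_cast hf)
    exact this.2.2
  have hFd : Differentiable ℝ (deriv f) := h2.differentiable one_ne_zero
  set F := deriv f with hF
  set E : ℝ → ℝ := fun s => (F s).re^2 + (F s).im^2
      + (1/4)*((f s).re^2 + (f s).im^2 + ν)^2 with hE
  have key : ∀ s, HasDerivAt E 0 s := by
    intro s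
    have hfs : HasDerivAt f (F s) s := (hfd s).hasDerivAt
    have hFs : HasDerivAt F (deriv F s) s := (hFd s).hasDerivAt
    have hur : HasDerivAt (fun t => (f t).re) (F s).re s :=
      (Complex.reCLM.hasFDerivAt.comp_hasDerivAt s hfs)
    have hui : HasDerivAt (fun t => (f t).im) (F s).im s :=
      (Complex.imCLM.hasFDerivAt.comp_hasDerivAt s hfs)
    have hpr : HasDerivAt (fun t => (F t).re) (deriv F s).re s :=
      (Complex.reCLM.hasFDerivAt.comp_hasDerivAt s hFs)
    have hpi : HasDerivAt (fun t => (F t).im) (deriv F s).im s :=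
      (Complex.imCLM.hasFDerivAt.comp_hasDerivAt s hFs)
    have hEd : HasDerivAt E
        (2*(F s).re^1*(deriv F s).re + 2*(F s).im^1*(deriv F s).im
          + (1/4)*(2*((f s).re^2+(f s).im^2+ν)^1
            * (2*(f s).re^1*(F s).re + 2*(f s).im^1*(F s).im))) s := by
      exact ((hpr.pow 2).add (hpi.pow 2)).add
        ((((((hur.pow 2).add (hui.pow 2)).add_const ν).pow 2).const_mul (1/4 : ℝ)))
    have hos := hode s
    rw [Complex.ext_iff] at hos
    simp [Complex.add_re, Complex.add_im, Complex.mul_re, Complex.mul_im,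
      Complex.div_re, Complex.div_im, Complex.normSq_apply, Complex.sq_norm] at hos
    obtain ⟨h1, h2'⟩ := hos
    convert hEd using 1
    linear_combination (-2*(F s).re)*h1 + (-2*(F s).im)*h2'
  have hconst : ∀ s, E s = E 0 := by
    intro s
    exact is_const_of_deriv_eq_zero (fun t => (key t).differentiableAt)
      (fun t => (key t).deriv) s 0
  intro s
  have habs : ∀ z : ℂ, ‖z‖ ^ 2 = z.re^2 + z.im^2 := by
    intro z; rw [Complex.sq_norm, Complex.normSq_apply]; ring
  simp only [habs]
  exact hconst s
end

section
/- Reduction of the spiral profile ODE to a planar system: let ν ∈ ℝ and let f : ℝ → ℂ be twice continuously differentiable solving f''(s) + i (s/2) f'(s) + (f(s)/2)( |f(s)|² + ν ) = 0 for all s ∈ ℝ. Define y(s) := 2 Re( conj(f(s)) f'(s) ), h(s) := Im( conj(f(s)) f'(s) ), and E₀ := |f'(0)|² + (1/4)( |f(0)|² + ν )². Then for all s ∈ ℝ: y'(s) = s h(s) + 2E₀ − (1/2)( 3|f(s)|² + ν )( |f(s)|² + ν ) and h'(s) = −(s/4) y(s). -/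
private lemma hdre' {g : ℝ → ℂ} {g' : ℂ} {x : ℝ} (h : HasDerivAt g g' x) :
    HasDerivAt (fun t => (g t).re) g'.re x :=
  Complex.reCLM.hasFDerivAt.comp_hasDerivAt x h

private lemma hdim' {g : ℝ → ℂ} {g' : ℂ} {x : ℝ} (h : HasDerivAt g g' x) :
    HasDerivAt (fun t => (g t).im) g'.im x :=
  Complex.imCLM.hasFDerivAt.comp_hasDerivAt x h

/-- Reduction of the spiral profile ODE `f'' + i(s/2)f' + (f/2)(|f|² + ν) = 0` to a planar
system: with `y = 2 Re(conj f · f')`, `h = Im(conj f · f')` and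
`E₀ = |f'(0)|² + (1/4)(|f(0)|² + ν)²`, one has
`y' = s h + 2E₀ − (1/2)(3|f|² + ν)(|f|² + ν)` and `h' = −(s/4) y`. -/
theorem statement19
    (ν : ℝ) (f : ℝ → ℂ) (hf : ContDiff ℝ 2 f)
    (hode : ∀ s : ℝ,
      deriv (deriv f) s + Complex.I * ((s/2 : ℝ) : ℂ) * deriv f s
        + (f s / 2) * ((‖f s‖^2 + ν : ℝ) : ℂ) = 0)
    (y h : ℝ → ℝ)
    (hy : ∀ s : ℝ, y s = 2 * ((starRingEnd ℂ) (f s) * deriv f s).re)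
    (hh : ∀ s : ℝ, h s = ((starRingEnd ℂ) (f s) * deriv f s).im)
    (E₀ : ℝ)
    (hE : E₀ = ‖deriv f 0‖^2 + (1/4) * (‖f 0‖^2 + ν)^2) :
    ∀ s : ℝ,
      deriv y s
          = s * h s + 2*E₀
            - (1/2) * (3 * ‖f s‖^2 + ν) * (‖f s‖^2 + ν)
        ∧ deriv h s = -(s/4) * y s := by
  -- differentiability
  have h2 : ContDiff ℝ ((1:ℕ∞)+1) f := by norm_num; exact_mod_cast hf
  rw [contDiff_succ_iff_deriv] at h2
  have hf1 : Differentiable ℝ f := h2.1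
  have hf2 : Differentiable ℝ (deriv f) := h2.2.2.differentiable (by norm_num)
  have d1 : ∀ s, HasDerivAt f (deriv f s) s := fun s => (hf1 s).hasDerivAt
  have d2 : ∀ s, HasDerivAt (deriv f) (deriv (deriv f) s) s := fun s => (hf2 s).hasDerivAt
  have habs : ∀ z : ℂ, ‖z‖^2 = z.re^2 + z.im^2 := by
    intro z; rw [Complex.sq_norm, Complex.normSq_apply]; ring
  -- ODE solved for f''
  have hode' : ∀ s : ℝ, deriv (deriv f) s = -(Complex.I * ((s/2:ℝ):ℂ) * deriv f s)
      - (((‖f s‖^2 + ν)/2 : ℝ):ℂ) * f s := by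
    intro s
    have hq := hode s
    push_cast at hq ⊢
    linear_combination hq
  -- Energy function and its constancy
  set E : ℝ → ℝ := fun s => ‖deriv f s‖^2 + (1/4) * (‖f s‖^2 + ν)^2
    with hEdef
  have hEfun : E = fun t => ((starRingEnd ℂ) (deriv f t) * deriv f t).re
      + (1/4) * (((starRingEnd ℂ) (f t) * f t).re + ν)^2 := by
    funext t
    simp only [hEdef, habs, Complex.mul_re, Complex.conj_re, Complex.conj_im]
    ring
  have dE : ∀ s, HasDerivAt E 0 s := by
    intro s
    have hB : HasDerivAt (fun t => ((starRingEnd ℂ) (deriv f t) * deriv f t).re)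
        (((starRingEnd ℂ) (deriv (deriv f) s) * deriv f s
          + (starRingEnd ℂ) (deriv f s) * deriv (deriv f) s).re) s :=
      hdre' (((d2 s).star).mul (d2 s))
    have hA : HasDerivAt (fun t => ((starRingEnd ℂ) (f t) * f t).re)
        (((starRingEnd ℂ) (deriv f s) * f s + (starRingEnd ℂ) (f s) * deriv f s).re) s :=
      hdre' (((d1 s).star).mul (d1 s))
    have hAν := (hA.add_const ν).pow 2
    have htot := hB.add (hAν.const_mul (1/4 : ℝ))
    rw [hEfun]
    convert htot using 1
    · rfl
    · rfl
    · rfl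
    rw [hode' s, habs (f s)]
    simp only [Complex.mul_re, Complex.mul_im, Complex.add_re, Complex.add_im,
      Complex.sub_re, Complex.sub_im, Complex.neg_re, Complex.neg_im,
      Complex.I_re, Complex.I_im, Complex.ofReal_re, Complex.ofReal_im,
      Complex.conj_re, Complex.conj_im]
    ring
  have hEdiff : Differentiable ℝ E := fun s => (dE s).differentiableAt
  have hEderiv : ∀ s, deriv E s = 0 := fun s => (dE s).deriv
  have hEconst : ∀ s, E s = E₀ := by
    intro s
    have := is_const_of_deriv_eq_zero hEdiff hEderiv s 0
    rw [this, hE]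
  -- main computations
  intro s
  have hyfun : y = fun t => 2 * ((starRingEnd ℂ) (f t) * deriv f t).re := funext hy
  have hhfun : h = fun t => ((starRingEnd ℂ) (f t) * deriv f t).im := funext hh
  have hG : HasDerivAt (fun t => (starRingEnd ℂ) (f t) * deriv f t)
      ((starRingEnd ℂ) (deriv f s) * deriv f s + (starRingEnd ℂ) (f s) * deriv (deriv f) s) s :=
    ((d1 s).star).mul (d2 s)
  constructor
  · have hyd : HasDerivAt y (2 * ((starRingEnd ℂ) (deriv f s) * deriv f s
        + (starRingEnd ℂ) (f s) * deriv (deriv f) s).re) s := by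
      rw [hyfun]; exact (hdre' hG).const_mul 2
    rw [hyd.deriv, hh s]
    have hEs : 2 * E₀ = 2 * (‖deriv f s‖^2 + (1/4) * (‖f s‖^2 + ν)^2) := by
      rw [← hEconst s]
    rw [hEs, hode' s, habs (f s), habs (deriv f s)]
    simp only [Complex.mul_re, Complex.mul_im, Complex.add_re, Complex.add_im,
      Complex.sub_re, Complex.sub_im, Complex.neg_re, Complex.neg_im,
      Complex.I_re, Complex.I_im, Complex.ofReal_re, Complex.ofReal_im,
      Complex.conj_re, Complex.conj_im]
    ring
  · have hhd : HasDerivAt h (((starRingEnd ℂ) (deriv f s) * deriv f s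
        + (starRingEnd ℂ) (f s) * deriv (deriv f) s).im) s := by
      rw [hhfun]; exact hdim' hG
    rw [hhd.deriv, hy s, hode' s, habs (f s)]
    simp only [Complex.mul_re, Complex.mul_im, Complex.add_re, Complex.add_im,
      Complex.sub_re, Complex.sub_im, Complex.neg_re, Complex.neg_im,
      Complex.I_re, Complex.I_im, Complex.ofReal_re, Complex.ofReal_im,
      Complex.conj_re, Complex.conj_im]
    ring
end
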